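/- arXiv:2109.00592 — 2 statements merged into one kernel-verified Lean document; each statement's English description precedes it below -/
import Mathlib

section
/- Let R be an F-finite F-pure Noetherian ring of prime characteristic p and let I = {I_n} be an F-pure filtration. Then the associated graded algebra gr(I) = ⊕_{n≥0} I_n/I_{n+1} is F-pure. -/
set_option maxHeartbeats 1000000
set_option synthInstance.maxHeartbeats 400000

noncomputable section

section Core
variable {R : Type*} [CommRing R]

/-- A Frobenius splitting: identifying `R^{1/p}` with `R` via `p`-th roots, an additive map
`φ : R^{1/p} → R` which is `R`-linear (`φ(a^p b^{1/p}) = a φ(b^{1/p})`) and splits the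
inclusion `R ⊆ R^{1/p}` (equivalently `φ 1 = 1`). -/
def IsFrobeniusSplitting (p : ℕ) (φ : R → R) : Prop :=
  (∀ a b : R, φ (a + b) = φ a + φ b) ∧ (∀ a b : R, φ (a ^ p * b) = a * φ b) ∧ φ 1 = 1

/-- A ring is `F`-split (`F`-pure in the `F`-finite case) if Frobenius splits. -/
def IsFSplitRing (p : ℕ) (A : Type*) [CommRing A] : Prop :=
  ∃ φ : A → A, IsFrobeniusSplitting p φ

/-- `A` is `F`-finite: `A` is a finitely generated module over its subring of `p`-th powers. -/
def IsFFiniteRing (p : ℕ) (A : Type*) [CommRing A] : Prop :=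
  ∃ (n : ℕ) (g : Fin n → A), ∀ x : A, ∃ c : Fin n → A, x = ∑ i, c i ^ p * g i

/-- A filtration of ideals. -/
def IsIdealFiltration (I : ℕ → Ideal R) : Prop :=
  I 0 = ⊤ ∧ (∀ n, I (n + 1) ≤ I n) ∧ ∀ m n, I m * I n ≤ I (m + n)

/-- An `F`-pure filtration. -/
def IsFPureFiltration (p : ℕ) (I : ℕ → Ideal R) : Prop :=
  IsIdealFiltration I ∧ ∃ φ : R → R, IsFrobeniusSplitting p φ ∧
    ∀ n : ℕ, ∀ x ∈ I (n * p + 1), φ x ∈ I (n + 1)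

/-- The Frobenius power `J^{[p]}` of an ideal. -/
def Ideal.frobPow (p : ℕ) (J : Ideal R) : Ideal R :=
  Ideal.span ((fun a => a ^ p) '' (J : Set R))

/-- The `n`-th symbolic power `I^{(n)}`. -/
def Ideal.symbPow (I : Ideal R) (n : ℕ) : Ideal R where
  carrier := {r : R | ∃ s : R, (∀ P ∈ I.minimalPrimes, s ∉ P) ∧ s * r ∈ I ^ n}
  zero_mem' :=
    ⟨1, fun P hP h1 => hP.1.1.ne_top ((Ideal.eq_top_iff_one P).mpr h1), by simp⟩
  add_mem' := by
    rintro a b ⟨s, hs, hsa⟩ ⟨t, ht, htb⟩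
    refine ⟨s * t, fun P hP hst => ((hP.1.1.mem_or_mem hst).elim (hs P hP) (ht P hP)), ?_⟩
    have h1 : (s * t) * (a + b) = t * (s * a) + s * (t * b) := by ring
    rw [h1]
    exact (I ^ n).add_mem (Ideal.mul_mem_left _ _ hsa) (Ideal.mul_mem_left _ _ htb)
  smul_mem' := by
    rintro c x ⟨s, hs, hsx⟩
    refine ⟨s, hs, ?_⟩
    have h1 : s * (c • x) = c * (s * x) := by
      simp only [smul_eq_mul]; ring
    rw [h1]
    exact Ideal.mul_mem_left _ _ hsx

end Core

section Rees
variable {R : Type*} [CommRing R]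

/-- The Rees algebra `⊕ₙ Iₙ Tⁿ ⊆ R[T]` of a filtration. -/
def filtrationRees (I : ℕ → Ideal R) (hI : IsIdealFiltration I) : Subalgebra R (Polynomial R) where
  carrier := {f : Polynomial R | ∀ n, f.coeff n ∈ I n}
  add_mem' := by
    intro f g hf hg n
    rw [Polynomial.coeff_add]
    exact (I n).add_mem (hf n) (hg n)
  mul_mem' := by
    intro f g hf hg n
    rw [Polynomial.coeff_mul]
    refine Ideal.sum_mem _ fun x hx => ?_
    have h := hI.2.2 x.1 x.2 (Ideal.mul_mem_mul (hf x.1) (hg x.2))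
    rwa [Finset.HasAntidiagonal.mem_antidiagonal.mp hx] at h
  one_mem' := by
    intro n
    cases n with
    | zero => simp [hI.1]
    | succ n => simp [Polynomial.coeff_one]
  zero_mem' := by intro n; simp
  algebraMap_mem' := by
    intro r n
    cases n with
    | zero => simp [hI.1]
    | succ n => simp [Polynomial.coeff_C]

/-- The ideal `⊕ₙ I_{n+1} Tⁿ` of the Rees algebra; the quotient is the associated graded
algebra `gr(𝕀) = ⊕ₙ Iₙ/I_{n+1}`. -/
def grFiltIdeal (I : ℕ → Ideal R) (hI : IsIdealFiltration I) : Ideal (filtrationRees I hI) where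
  carrier := {f | ∀ n, (f : Polynomial R).coeff n ∈ I (n + 1)}
  add_mem' := by
    rintro f g hf hg n
    have h : ((f + g : filtrationRees I hI) : Polynomial R) = (f : Polynomial R) + g := rfl
    rw [h, Polynomial.coeff_add]
    exact (I (n + 1)).add_mem (hf n) (hg n)
  zero_mem' := by
    intro n
    have h : ((0 : filtrationRees I hI) : Polynomial R) = 0 := rfl
    rw [h]; simp
  smul_mem' := by
    intro c f hf n
    change ((c : Polynomial R) * (f : Polynomial R)).coeff n ∈ I (n + 1)
    rw [Polynomial.coeff_mul]
    refine Ideal.sum_mem _ fun x hx => ?_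
    have h2 := hI.2.2 x.1 (x.2 + 1) (Ideal.mul_mem_mul (c.2 x.1) (hf x.2))
    have hx' : x.1 + (x.2 + 1) = n + 1 := by
      have := Finset.HasAntidiagonal.mem_antidiagonal.mp hx; omega
    rwa [hx'] at h2

end Rees


open Polynomial

/-! The splitting `φ` of `R` induces the splitting `Φ(∑ aₙ Tⁿ) = ∑ φ(a_{np}) Tⁿ` of `R[T]`;
it is linear over `p`-th powers because in characteristic `p` the polynomial `(∑ aₙ Tⁿ)^p` is
`∑ aₙ^p T^{np}`.
`F`-purity of the filtration says exactly that `Φ` maps the Rees algebra `⊕ Iₙ Tⁿ` into itself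
and the ideal `⊕ I_{n+1} Tⁿ` into itself, so `Φ` restricts to the Rees algebra and descends to
its quotient `gr(I)`. -/

namespace IsFrobeniusSplitting

variable {A : Type*} [CommRing A] {p : ℕ} {φ : A → A}

theorem map_zero (h : IsFrobeniusSplitting p φ) : φ 0 = 0 :=
  (AddMonoidHom.mk' φ h.1).map_zero

theorem map_sub (h : IsFrobeniusSplitting p φ) (a b : A) : φ (a - b) = φ a - φ b :=
  (AddMonoidHom.mk' φ h.1).map_sub a b

theorem map_sum (h : IsFrobeniusSplitting p φ) {ι : Type*} (s : Finset ι) (g : ι → A) :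
    φ (∑ i ∈ s, g i) = ∑ i ∈ s, φ (g i) :=
  _root_.map_sum (AddMonoidHom.mk' φ h.1) g s

theorem restrict {S : Type*} [SetLike S A] [SubringClass S A] {s : S}
    (h : IsFrobeniusSplitting p φ) (hs : ∀ x ∈ s, φ x ∈ s) :
    IsFrobeniusSplitting p fun x : s => (⟨φ x, hs x x.2⟩ : s) :=
  ⟨fun a b => Subtype.ext (h.1 a b), fun a b => Subtype.ext (h.2.1 a b), Subtype.ext h.2.2⟩

theorem isFSplitRing_quotient (h : IsFrobeniusSplitting p φ) {J : Ideal A}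
    (hJ : ∀ x ∈ J, φ x ∈ J) : IsFSplitRing p (A ⧸ J) := by
  let ψ : A ⧸ J → A ⧸ J := Quotient.lift (fun a => Ideal.Quotient.mk J (φ a)) fun a b hab => by
    rw [Ideal.Quotient.eq, ← h.map_sub]
    exact hJ _ ((Submodule.quotientRel_def J).mp hab)
  have hψ (a : A) : ψ (Ideal.Quotient.mk J a) = Ideal.Quotient.mk J (φ a) := rfl
  refine ⟨ψ, fun x y => ?_, fun x y => ?_, ?_⟩
  · obtain ⟨a, rfl⟩ := Ideal.Quotient.mk_surjective x
    obtain ⟨b, rfl⟩ := Ideal.Quotient.mk_surjective y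
    simp only [← map_add, hψ, h.1]
  · obtain ⟨a, rfl⟩ := Ideal.Quotient.mk_surjective x
    obtain ⟨b, rfl⟩ := Ideal.Quotient.mk_surjective y
    simp only [← map_pow, ← map_mul, hψ, h.2.1]
  · rw [← map_one (Ideal.Quotient.mk J), hψ, h.2.2]

end IsFrobeniusSplitting

namespace Polynomial

variable {R S : Type*} [Semiring R] [Semiring S]

def mapRange (φ : R → S) (hφ : φ 0 = 0) (f : R[X]) : S[X] :=
  ⟨.ofCoeff (f.toFinsupp.coeff.mapRange φ hφ)⟩

@[simp]
theorem coeff_mapRange (φ : R → S) (hφ : φ 0 = 0) (f : R[X]) (n : ℕ) :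
    (f.mapRange φ hφ).coeff n = φ (f.coeff n) := rfl

theorem contract_pow_mul {R : Type*} [CommRing R] {p : ℕ} [Fact p.Prime] [CharP R p]
    (a f : R[X]) : (a ^ p * f).contract p = a.map (frobenius R p) * f.contract p := by
  rw [← map_frobenius_expand, map_expand, mul_comm,
    contract_mul_expand (Fact.out : p.Prime).ne_zero, mul_comm]

end Polynomial

namespace IsFrobeniusSplitting

variable {R : Type*} [CommRing R] {p : ℕ} {φ : R → R}

theorem mapRange_map_frobenius_mul [Fact p.Prime] [CharP R p]
    (h : IsFrobeniusSplitting p φ) (a f : R[X]) :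
    (a.map (frobenius R p) * f).mapRange φ h.map_zero = a * f.mapRange φ h.map_zero := by
  ext n
  simp only [coeff_mapRange, coeff_mul, coeff_map, frobenius_def, h.map_sum]
  exact Finset.sum_congr rfl fun x _ => h.2.1 _ _

theorem polynomial (hp : p.Prime) [CharP R p] (h : IsFrobeniusSplitting p φ) :
    IsFrobeniusSplitting p fun f : R[X] => (f.contract p).mapRange φ h.map_zero := by
  have := Fact.mk hp
  refine ⟨fun f g => ?_, fun a f => ?_, ?_⟩
  · ext n
    simp [coeff_contract hp.ne_zero, h.1]
  · beta_reduce
    rw [contract_pow_mul, h.mapRange_map_frobenius_mul]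
  · ext n
    simp only [coeff_mapRange, coeff_contract hp.ne_zero, coeff_one, mul_eq_zero, hp.ne_zero,
      or_false]
    split_ifs <;> simp [h.2.2, h.map_zero]

end IsFrobeniusSplitting

theorem IsIdealFiltration.antitone {R : Type*} [CommRing R] {I : ℕ → Ideal R}
    (hI : IsIdealFiltration I) : Antitone I :=
  antitone_nat_of_succ_le hI.2.1

theorem isFSplitRing_associatedGraded_general
    {R : Type*} [CommRing R]
    (p : ℕ) (hp : p.Prime) [CharP R p]
    (I : ℕ → Ideal R) (hI : IsIdealFiltration I)
    (hFPfil : IsFPureFiltration p I) :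
    IsFSplitRing p (↥(filtrationRees I hI) ⧸ grFiltIdeal I hI) := by
  obtain ⟨-, φ, hφ, hφI⟩ := hFPfil
  have hRees : ∀ f ∈ filtrationRees I hI,
      (f.contract p).mapRange φ hφ.map_zero ∈ filtrationRees I hI := by
    intro f hf n
    rw [coeff_mapRange, coeff_contract hp.ne_zero]
    cases n with
    | zero => simp [hI.1]
    | succ n =>
      refine hφI n _ (hI.antitone ?_ (hf _))
      nlinarith [hp.two_le]
  refine ((hφ.polynomial hp).restrict hRees).isFSplitRing_quotient fun f hf n => ?_
  change (((f : R[X]).contract p).mapRange φ hφ.map_zero).coeff n ∈ I (n + 1)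
  rw [coeff_mapRange, coeff_contract hp.ne_zero]
  exact hφI n _ (hf _)

/-- The associated graded algebra `gr(𝕀) = ⊕ₙ Iₙ/I_{n+1}` of an `F`-pure
filtration on an `F`-finite `F`-pure Noetherian ring of characteristic `p` is `F`-pure. -/
theorem isFSplitRing_associatedGraded
    {R : Type*} [CommRing R] [IsNoetherianRing R]
    (p : ℕ) (hp : p.Prime) [CharP R p]
    (hFF : IsFFiniteRing p R) (hFP : IsFSplitRing p R)
    (I : ℕ → Ideal R) (hI : IsIdealFiltration I)
    (hFPfil : IsFPureFiltration p I) :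
    IsFSplitRing p (↥(filtrationRees I hI) ⧸ grFiltIdeal I hI) :=
  isFSplitRing_associatedGraded_general p hp I hI hFPfil
end
end

section
/- Let R be an F-finite F-pure Noetherian local or graded ring of characteristic p, and let {I_n} be an F-pure filtration. Then depth(I_n) ≤ depth(I_{⌈n/p^e⌉}) for all n, e ≥ 0. -/
/-!
Put `q = p ^ e` and `m = ⌈n / q⌉`. Then `I_m ^ q ⊆ I_{mq} ⊆ I_n`, and the `e`-th iterate of the
splitting maps `I_n` into `I_m`, so `x ↦ x ^ q` and `φ^e` exhibit `I_m` as an `R`-linear direct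
summand of `F^e_* I_n`. If `x₁, …, x_d ∈ 𝔪` is regular on `I_n`, so is `x₁^q, …, x_d^q`, i.e.
`x₁, …, x_d` is weakly regular on `F^e_* I_n`, hence on its summand `I_m`; as `I_m` is finitely
generated over the local ring `R`, this sequence is regular on `I_m`.
-/

set_option maxHeartbeats 1000000
set_option synthInstance.maxHeartbeats 400000

noncomputable section

/-- The depth of a module over a local ring: the supremum of lengths of regular sequences on
`M` contained in the maximal ideal. -/
noncomputable def localDepth (R : Type*) [CommRing R] [IsLocalRing R]
    (M : Type*) [AddCommGroup M] [Module R M] : ℕ∞ :=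
  sSup {n : ℕ∞ | ∃ rs : List R, (rs.length : ℕ∞) = n ∧
    (∀ r ∈ rs, r ∈ IsLocalRing.maximalIdeal R) ∧ RingTheory.Sequence.IsRegular M rs}

namespace RingTheory.Sequence

open Function Submodule Pointwise

variable {R : Type*} [CommRing R] {M N : Type*} [AddCommGroup M] [Module R M]
  [AddCommGroup N] [Module R N]

theorem IsWeaklyRegular.of_subsingleton [Subsingleton M] (rs : List R) :
    IsWeaklyRegular M rs :=
  (isWeaklyRegular_iff M rs).mpr fun _ _ _ _ _ => Subsingleton.elim _ _

theorem IsWeaklyRegular.of_comp_eq_id {rs : List R} (h : IsWeaklyRegular M rs)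
    (i : N →ₗ[R] M) (π : M →ₗ[R] N) (hπi : π ∘ₗ i = LinearMap.id) :
    IsWeaklyRegular N rs := by
  induction h generalizing N with
  | nil => exact .nil R N
  | cons r rs hr _ ih =>
    have hi : Injective i := LeftInverse.injective (g := π) (LinearMap.congr_fun hπi)
    refine .cons (hr.of_injective i hi) (ih (QuotSMulTop.map r i) (QuotSMulTop.map r π) ?_)
    rw [← QuotSMulTop.map_comp, hπi, QuotSMulTop.map_id]

theorem IsWeaklyRegular.of_injective_of_exact_of_surjective {A C : Type*} [AddCommGroup A]
    [Module R A] [AddCommGroup C] [Module R C] {f : A →ₗ[R] M} {g : M →ₗ[R] C}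
    (hf : Injective f) (hfg : Exact f g) (hg : Surjective g) {rs : List R}
    (hA : IsWeaklyRegular A rs) (hC : IsWeaklyRegular C rs) : IsWeaklyRegular M rs := by
  induction rs generalizing A M C with
  | nil => exact .nil R M
  | cons r rs ih =>
    rw [isWeaklyRegular_cons_iff] at hA hC ⊢
    refine ⟨isSMulRegular_of_range_eq_ker hf hfg.linearMap_ker_eq.symm hA.1 hC.1, ?_⟩
    have hf' : Injective (QuotSMulTop.map r f) := by
      have := QuotSMulTop.map_first_exact_on_four_term_exact_of_isSMulRegular_last
        ((f.exact_zero_iff_injective PUnit).mpr hf) hfg hC.1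
      rwa [map_zero, LinearMap.exact_zero_iff_injective] at this
    exact ih hf' (QuotSMulTop.map_exact r hfg hg) (QuotSMulTop.map_surjective r hg) hA.2 hC.2

theorem _root_.IsSMulRegular.isWeaklyRegular_quotSMulTop_mul {r s : R} (hr : IsSMulRegular M r)
    {rs : List R} (hs : IsWeaklyRegular (QuotSMulTop s M) rs)
    (hr' : IsWeaklyRegular (QuotSMulTop r M) rs) :
    IsWeaklyRegular (QuotSMulTop (r * s) M) rs := by
  -- `0 → M/sM → M/rsM → M/rM → 0`, the first map being multiplication by `r`
  have mem_smul_top {t : R} {x : M} : x ∈ t • (⊤ : Submodule R M) ↔ ∃ y, t • y = x := by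
    simp [mem_smul_pointwise_iff_exists]
  let f : QuotSMulTop s M →ₗ[R] QuotSMulTop (r * s) M :=
    mapQ _ _ (LinearMap.lsmul R M r) fun x hx => by
      obtain ⟨y, rfl⟩ := mem_smul_top.mp hx
      exact mem_smul_top.mpr ⟨y, by simp [smul_smul, mul_comm]⟩
  let g : QuotSMulTop (r * s) M →ₗ[R] QuotSMulTop r M :=
    mapQ _ _ LinearMap.id fun x hx => by
      obtain ⟨y, rfl⟩ := mem_smul_top.mp hx
      exact mem_smul_top.mpr ⟨s • y, by simp [smul_smul]⟩
  have hf : Injective f := by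
    rw [← LinearMap.ker_eq_bot, eq_bot_iff]
    rintro ⟨x⟩ hx
    obtain ⟨y, hy⟩ := mem_smul_top.mp ((Quotient.mk_eq_zero _).mp hx)
    refine (Quotient.mk_eq_zero _).mpr (mem_smul_top.mpr ⟨y, hr ?_⟩)
    simpa [smul_smul] using hy
  have hfg : Exact f g := by
    rintro ⟨x⟩
    constructor
    · intro hx
      obtain ⟨y, rfl⟩ := mem_smul_top.mp ((Quotient.mk_eq_zero _).mp hx)
      exact ⟨Submodule.Quotient.mk y, rfl⟩
    · rintro ⟨⟨y⟩, hy⟩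
      obtain ⟨z, hz⟩ := mem_smul_top.mp ((Submodule.Quotient.eq _).mp hy)
      refine (Quotient.mk_eq_zero _).mpr (mem_smul_top.mpr ⟨y - s • z, ?_⟩)
      simp_all [smul_sub, smul_smul]
  have hg : Surjective g := by
    rintro ⟨x⟩
    exact ⟨Submodule.Quotient.mk x, rfl⟩
  exact hs.of_injective_of_exact_of_surjective hf hfg hg hr'

theorem _root_.IsSMulRegular.isWeaklyRegular_quotSMulTop_pow {r : R} (hr : IsSMulRegular M r)
    {rs : List R} (h : IsWeaklyRegular (QuotSMulTop r M) rs) (k : ℕ) :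
    IsWeaklyRegular (QuotSMulTop (r ^ k) M) rs := by
  induction k with
  | zero =>
    have : Subsingleton (QuotSMulTop (r ^ 0) M) := by simp
    exact .of_subsingleton rs
  | succ k ih =>
    rw [pow_succ']
    exact hr.isWeaklyRegular_quotSMulTop_mul ih h

theorem IsWeaklyRegular.map_pow {rs : List R} (h : IsWeaklyRegular M rs) (k : ℕ) :
    IsWeaklyRegular M (rs.map (· ^ k)) := by
  induction h with
  | nil => exact .nil R _
  | cons r rs hr hrs ih => exact .cons (hr.pow k) (hr.isWeaklyRegular_quotSMulTop_pow ih k)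

end RingTheory.Sequence

/-- `M` with `R` acting through `σ`; for `σ` the `e`-th power of Frobenius this is `F^e_* M`. -/
def ScalarTwist {R : Type*} [CommRing R] (_σ : R →+* R) (M : Type*) : Type _ := M

namespace ScalarTwist

variable {R : Type*} [CommRing R] (σ : R →+* R) {M : Type*} [AddCommGroup M] [Module R M]

instance : AddCommGroup (ScalarTwist σ M) := inferInstanceAs (AddCommGroup M)

instance : Module R (ScalarTwist σ M) := Module.compHom M σ

def of : M ≃+ ScalarTwist σ M := AddEquiv.refl M

theorem smul_of (r : R) (x : M) : r • of σ x = of σ (σ r • x) := rfl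

theorem isWeaklyRegular_iff {rs : List R} :
    RingTheory.Sequence.IsWeaklyRegular (ScalarTwist σ M) rs ↔
      RingTheory.Sequence.IsWeaklyRegular M (rs.map σ) :=
  AddEquiv.isWeaklyRegular_congr (e := (of σ (M := M)).symm) <|
    List.forall₂_map_right_iff.mpr <| List.forall₂_same.mpr fun _ _ _ => rfl

end ScalarTwist

namespace IsFrobeniusSplitting

variable {R : Type*} [CommRing R] {p : ℕ} {φ : R → R}

theorem map_pow_self (hφ : IsFrobeniusSplitting p φ) (a : R) : φ (a ^ p) = a := by
  simpa [hφ.2.2] using hφ.2.1 a 1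

theorem iterate (hφ : IsFrobeniusSplitting p φ) (e : ℕ) :
    IsFrobeniusSplitting (p ^ e) φ^[e] := by
  induction e with
  | zero => exact ⟨fun _ _ => rfl, fun _ _ => by simp, rfl⟩
  | succ e ih =>
    refine ⟨fun a b => ?_, fun a b => ?_, ?_⟩
    · simp only [Function.iterate_succ_apply', ih.1, hφ.1]
    · rw [Function.iterate_succ_apply', pow_succ', pow_mul, ih.2.1, hφ.2.1,
        Function.iterate_succ_apply']
    · rw [Function.iterate_succ_apply', ih.2.2, hφ.2.2]

open RingTheory.Sequence in
theorem isWeaklyRegular_of_pow_mem [ExpChar R p] {e : ℕ}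
    (hφ : IsFrobeniusSplitting (p ^ e) φ) {J K : Ideal R} (hJ : ∀ x ∈ J, x ^ p ^ e ∈ K)
    (hK : ∀ y ∈ K, φ y ∈ J) {rs : List R} (h : IsWeaklyRegular K (rs.map (· ^ p ^ e))) :
    IsWeaklyRegular J rs := by
  let σ := iterateFrobenius R p e
  let of := ScalarTwist.of σ (M := K)
  let i : J →ₗ[R] ScalarTwist σ K :=
    { toFun x := of ⟨x ^ p ^ e, hJ x x.2⟩
      map_add' x y := by
        rw [← map_add]; congr 1; ext; simp [add_pow_expChar_pow]
      map_smul' r x := by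
        rw [RingHom.id_apply, ScalarTwist.smul_of]; congr 1; ext
        simp [mul_pow, σ, iterateFrobenius_def] }
  let π : ScalarTwist σ K →ₗ[R] J :=
    { toFun y := ⟨φ (of.symm y), hK _ (of.symm y).2⟩
      map_add' x y := Subtype.ext (hφ.1 _ _)
      map_smul' r y := Subtype.ext (hφ.2.1 _ _) }
  refine ((ScalarTwist.isWeaklyRegular_iff σ).mpr h).of_comp_eq_id i π ?_
  exact LinearMap.ext fun x => Subtype.ext (hφ.map_pow_self x)

end IsFrobeniusSplitting

namespace IsIdealFiltration

variable {R : Type*} [CommRing R] {I : ℕ → Ideal R}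

theorem antitone_s16 (hI : IsIdealFiltration I) : Antitone I := antitone_nat_of_succ_le hI.2.1

theorem pow_mem (hI : IsIdealFiltration I) {m : ℕ} {x : R} (hx : x ∈ I m) (k : ℕ) :
    x ^ k ∈ I (m * k) := by
  induction k with
  | zero => simp [hI.1]
  | succ k ih => simpa [pow_succ, Nat.mul_succ] using hI.2.2 _ _ (Ideal.mul_mem_mul ih hx)

end IsIdealFiltration

theorem Antitone.iterate_mem_of_map_mem {R : Type*} [CommRing R] {I : ℕ → Ideal R}
    (hI : Antitone I) {p : ℕ} {φ : R → R} (hφ : ∀ n, ∀ x ∈ I (n * p + 1), φ x ∈ I (n + 1))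
    (e : ℕ) {m : ℕ} {x : R} (hx : x ∈ I (m + 1)) : φ^[e] x ∈ I (m / p ^ e + 1) := by
  induction e with
  | zero => simpa using hx
  | succ e ih =>
    rw [Function.iterate_succ_apply', pow_succ, ← Nat.div_div_eq_div_mul]
    exact hφ _ _ (hI (Nat.succ_le_succ (Nat.div_mul_le_self _ p)) ih)

theorem localDepth_le_of_isWeaklyRegular {R : Type*} [CommRing R] [IsLocalRing R]
    {M N : Type*} [AddCommGroup M] [Module R M] [AddCommGroup N] [Module R N]
    [Module.Finite R N] (hN : Nontrivial M → Nontrivial N)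
    (h : ∀ rs : List R, RingTheory.Sequence.IsWeaklyRegular M rs →
      RingTheory.Sequence.IsWeaklyRegular N rs) :
    localDepth R M ≤ localDepth R N := by
  refine sSup_le_sSup fun _ ⟨rs, hlen, hmax, hreg⟩ => ⟨rs, hlen, hmax, ?_⟩
  have := hN hreg.nontrivial
  exact (IsLocalRing.isRegular_iff_isWeaklyRegular_of_subset_maximalIdeal hmax).mpr
    (h rs hreg.toIsWeaklyRegular)

theorem depth_le_of_fPureFiltration_general
    {R : Type*} [CommRing R] [IsLocalRing R] [IsNoetherianRing R]
    (p : ℕ) (hp : p.Prime) [CharP R p]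
    (I : ℕ → Ideal R) (hI : IsFPureFiltration p I) (n e : ℕ) :
    localDepth R (I n) ≤ localDepth R (I ((n + p ^ e - 1) / p ^ e)) := by
  obtain ⟨hfil, φ, hφ, hφI⟩ := hI
  have : ExpChar R p := .prime hp
  have hq : 0 < p ^ e := pow_pos hp.pos e
  rcases n with _ | m
  · rw [zero_add, Nat.div_eq_of_lt (Nat.sub_lt hq one_pos)]
  rw [show m + 1 + p ^ e - 1 = m + p ^ e by omega, Nat.add_div_right _ hq]
  have hle : I (m + 1) ≤ I (m / p ^ e + 1) := hfil.antitone_s16 (by simpa using Nat.div_le_self m _)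
  have hpow : ∀ x ∈ I (m / p ^ e + 1), x ^ p ^ e ∈ I (m + 1) := fun x hx =>
    hfil.antitone_s16 (by simpa [add_mul] using Nat.lt_div_mul_add hq) (hfil.pow_mem hx (p ^ e))
  exact localDepth_le_of_isWeaklyRegular (fun _ => (Submodule.inclusion_injective hle).nontrivial)
    fun rs hrs => (hφ.iterate e).isWeaklyRegular_of_pow_mem hpow
      (fun y hy => hfil.antitone_s16.iterate_mem_of_map_mem hφI e hy) (hrs.map_pow _)

/-- For an `F`-pure filtration `{Iₙ}` on an `F`-finite `F`-pure Noetherian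
local ring of characteristic `p`, `depth(Iₙ) ≤ depth(I_{⌈n/p^e⌉})` for all `n, e ≥ 0`. -/
theorem depth_le_of_fPureFiltration
    {R : Type*} [CommRing R] [IsLocalRing R] [IsNoetherianRing R]
    (p : ℕ) (hp : p.Prime) [CharP R p]
    (hFF : IsFFiniteRing p R) (hFP : IsFSplitRing p R)
    (I : ℕ → Ideal R) (hI : IsFPureFiltration p I) (n e : ℕ) :
    localDepth R (I n) ≤ localDepth R (I ((n + p ^ e - 1) / p ^ e)) :=
  depth_le_of_fPureFiltration_general p hp I hI n e
end
end
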